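/- For n ≥ 0, let Γ_n be the directed graph with source vertices s_1, …, s_n and sink vertices t_1, …, t_{n+1}, and with arrows s_i → t_i and s_i → t_{i+1} for 1 ≤ i ≤ n. Call a subset S of the vertices successor closed if whenever s_i ∈ S one also has t_i ∈ S and t_{i+1} ∈ S. Let P_n ∈ ℤ[x,y] be the generating polynomial P_n = Σ_S x^{|S ∩ {s_1,…,s_n}|} y^{|S ∩ {t_1,…,t_{n+1}}|}, where the sum runs over all successor closed subsets S of the vertices of Γ_n. Then P_0 = 1 + y, P_1 = (1 + y + xy)·P_0 − xy, and P_{n+2} = (1 + y + xy)·P_{n+1} − xy·P_n for all n ≥ 0. -/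
import Mathlib


open MvPolynomial

/-- A pair `(A, B)` of a set of sources `s_i` (`i : Fin n`) and a set of sinks `t_j`
(`j : Fin (n+1)`) of the coefficient quiver `Γ_n` of the preprojective Kronecker
representation `X_n` (with arrows `s_i → t_i` and `s_i → t_{i+1}`) is successor closed
if for every `s_i ∈ A` both `t_i ∈ B` and `t_{i+1} ∈ B`. -/
def SuccessorClosed {n : ℕ} (A : Finset (Fin n)) (B : Finset (Fin (n + 1))) : Prop :=
  ∀ i ∈ A, i.castSucc ∈ B ∧ i.succ ∈ B

open scoped Classical in
/-- The generating polynomial `P_n = Σ_S x^{#sources of S} y^{#sinks of S}` over all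
successor closed subsets `S` of the coefficient quiver `Γ_n`, in variables
`x = X 0`, `y = X 1`. -/
noncomputable def genPoly (n : ℕ) : MvPolynomial (Fin 2) ℤ :=
  ∑ A : Finset (Fin n), ∑ B : Finset (Fin (n + 1)),
    if SuccessorClosed A B then X 0 ^ A.card * X 1 ^ B.card else 0

/-! Auxiliary development: reformulation via Boolean functions. -/

/-- Weight of a boolean vector: product of `X c` over true positions. -/
noncomputable def wt (c : Fin 2) {m : ℕ} (f : Fin m → Bool) : MvPolynomial (Fin 2) ℤ :=
  ∏ i, if f i then X c else 1

/-- Successor closedness for boolean functions. -/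
def SC {n : ℕ} (f : Fin n → Bool) (g : Fin (n + 1) → Bool) : Prop :=
  ∀ i, f i = true → g i.castSucc = true ∧ g i.succ = true

open scoped Classical in
noncomputable def Qp (n : ℕ) : MvPolynomial (Fin 2) ℤ :=
  ∑ f : Fin n → Bool, ∑ g : Fin (n + 1) → Bool,
    if SC f g then wt 0 f * wt 1 g else 0

open scoped Classical in
noncomputable def Rp (n : ℕ) : MvPolynomial (Fin 2) ℤ :=
  ∑ f : Fin n → Bool, ∑ g : Fin (n + 1) → Bool,
    if SC f g ∧ g 0 = true then wt 0 f * wt 1 g else 0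

open scoped Classical in
lemma Qp_def (n : ℕ) : Qp n = ∑ f : Fin n → Bool, ∑ g : Fin (n + 1) → Bool,
    if SC f g then wt 0 f * wt 1 g else 0 := rfl

open scoped Classical in
lemma Rp_def (n : ℕ) : Rp n = ∑ f : Fin n → Bool, ∑ g : Fin (n + 1) → Bool,
    if SC f g ∧ g 0 = true then wt 0 f * wt 1 g else 0 := rfl

/-- Equivalence between finsets and boolean indicator functions. -/
def finsetEquiv (m : ℕ) : Finset (Fin m) ≃ (Fin m → Bool) where
  toFun A i := decide (i ∈ A)
  invFun f := Finset.univ.filter (fun i => f i = true)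
  left_inv A := by ext i; simp
  right_inv f := by funext i; simp

lemma wt_finset (c : Fin 2) {m : ℕ} (A : Finset (Fin m)) :
    wt c (finsetEquiv m A) = X c ^ A.card := by
  unfold wt finsetEquiv
  simp only [Equiv.coe_fn_mk, decide_eq_true_eq]
  rw [Finset.prod_ite_mem, Finset.univ_inter, Finset.prod_const]

lemma SC_finset {n : ℕ} (A : Finset (Fin n)) (B : Finset (Fin (n + 1))) :
    SC (finsetEquiv n A) (finsetEquiv (n + 1) B) ↔ SuccessorClosed A B := by
  unfold SC finsetEquiv SuccessorClosed
  simp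

open scoped Classical in
lemma genPoly_eq_Qp (n : ℕ) : genPoly n = Qp n := by
  unfold genPoly Qp
  rw [Fintype.sum_equiv (finsetEquiv n)
    (fun A => ∑ B : Finset (Fin (n + 1)),
      if SuccessorClosed A B then X (0:Fin 2) ^ A.card * X 1 ^ B.card else 0)
    (fun f => ∑ g : Fin (n + 1) → Bool, if SC f g then wt 0 f * wt 1 g else 0)]
  intro A
  rw [Fintype.sum_equiv (finsetEquiv (n+1))
    (fun B => if SuccessorClosed A B then X (0:Fin 2) ^ A.card * X 1 ^ B.card else 0)
    (fun g => if SC (finsetEquiv n A) g then wt 0 (finsetEquiv n A) * wt 1 g else 0)]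
  intro B
  rw [SC_finset, wt_finset, wt_finset]

lemma wt_cons (c : Fin 2) {m : ℕ} (a : Bool) (f : Fin m → Bool) :
    wt c (Fin.cons a f) = (if a then X c else 1) * wt c f := by
  unfold wt
  rw [Fin.prod_univ_succ]
  simp

lemma wt_zero (c : Fin 2) (f : Fin 0 → Bool) : wt c f = 1 := by
  unfold wt
  simp

lemma SC_cons {n : ℕ} (a b : Bool) (f : Fin n → Bool) (g : Fin (n + 1) → Bool) :
    SC (Fin.cons a f) (Fin.cons b g) ↔
      ((a = true → b = true ∧ g 0 = true) ∧ SC f g) := by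
  constructor
  · intro h
    refine ⟨fun ha => ?_, fun i hi => ?_⟩
    · have := h 0 (by simpa using ha)
      simpa using this
    · have := h i.succ (by simpa using hi)
      rw [← Fin.succ_castSucc] at this
      simpa using this
  · rintro ⟨h0, hS⟩ i
    induction i using Fin.cases with
    | zero =>
      intro hij
      simpa using h0 (by simpa using hij)
    | succ j =>
      intro hij
      have := hS j (by simpa using hij)
      rw [← Fin.succ_castSucc]
      simpa using this

open scoped Classical in
lemma sum_cons_split {n : ℕ} (F : (Fin (n + 1) → Bool) → MvPolynomial (Fin 2) ℤ) :
    (∑ f : Fin (n + 1) → Bool, F f) =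
      ∑ a : Bool, ∑ f : Fin n → Bool, F (Fin.cons a f) := by
  rw [← Fintype.sum_equiv (Fin.consEquiv (fun _ => Bool))
    (fun p => F (Fin.cons p.1 p.2)) F (fun p => rfl), Fintype.sum_prod_type]

open scoped Classical in
lemma double_split {n : ℕ}
    (G : (Fin (n + 1) → Bool) → (Fin (n + 2) → Bool) → MvPolynomial (Fin 2) ℤ) :
    (∑ f : Fin (n + 1) → Bool, ∑ g : Fin (n + 2) → Bool, G f g) =
      ∑ a : Bool, ∑ b : Bool, ∑ f : Fin n → Bool, ∑ g : Fin (n + 1) → Bool,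
        G (Fin.cons a f) (Fin.cons b g) := by
  rw [sum_cons_split (fun f => ∑ g : Fin (n + 2) → Bool, G f g)]
  refine Finset.sum_congr rfl fun a _ => ?_
  rw [show (∑ f : Fin n → Bool, ∑ g : Fin (n + 2) → Bool, G (Fin.cons a f) g) =
      ∑ f : Fin n → Bool, ∑ b : Bool, ∑ g : Fin (n + 1) → Bool,
        G (Fin.cons a f) (Fin.cons b g) from
    Finset.sum_congr rfl fun f _ => sum_cons_split _]
  exact Finset.sum_comm

open scoped Classical in
lemma Qp_term {n : ℕ} (a b : Bool) :
    (∑ f : Fin n → Bool, ∑ g : Fin (n + 1) → Bool,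
        if SC (Fin.cons a f) (Fin.cons b g) then
          wt 0 (Fin.cons a f) * wt 1 (Fin.cons b g) else 0) =
      cond a (cond b (X 0 * (X 1 * Rp n)) 0) (cond b (X 1 * Qp n) (Qp n)) := by
  cases a <;> cases b <;> simp only [cond_true, cond_false]
  · -- a = false, b = false
    rw [Qp_def]
    refine Finset.sum_congr rfl fun f _ => Finset.sum_congr rfl fun g _ => ?_
    by_cases h : SC f g
    · rw [if_pos ((SC_cons _ _ f g).mpr ⟨by simp, h⟩), if_pos h, wt_cons, wt_cons]
      simp
    · rw [if_neg (fun hc => h ((SC_cons _ _ f g).mp hc).2), if_neg h]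
  · -- a = false, b = true
    rw [Qp_def]
    simp only [Finset.mul_sum]
    refine Finset.sum_congr rfl fun f _ => Finset.sum_congr rfl fun g _ => ?_
    rw [mul_ite, mul_zero]
    by_cases h : SC f g
    · rw [if_pos ((SC_cons _ _ f g).mpr ⟨by simp, h⟩), if_pos h, wt_cons, wt_cons]
      simp
      ring
    · rw [if_neg (fun hc => h ((SC_cons _ _ f g).mp hc).2), if_neg h]
  · -- a = true, b = false
    refine Finset.sum_eq_zero fun f _ => Finset.sum_eq_zero fun g _ => if_neg fun hc => ?_
    have := ((SC_cons _ _ f g).mp hc).1 rfl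
    simp at this
  · -- a = true, b = true
    rw [Rp_def]
    simp only [Finset.mul_sum]
    refine Finset.sum_congr rfl fun f _ => Finset.sum_congr rfl fun g _ => ?_
    rw [mul_ite, mul_zero, mul_ite, mul_zero]
    by_cases h : SC f g ∧ g 0 = true
    · rw [if_pos ((SC_cons _ _ f g).mpr ⟨fun _ => ⟨rfl, h.2⟩, h.1⟩), if_pos h, wt_cons, wt_cons]
      simp
      ring
    · refine if_neg (fun hc => ?_) |>.trans (if_neg h).symm
      have hm := (SC_cons _ _ f g).mp hc
      exact h ⟨hm.2, (hm.1 rfl).2⟩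

open scoped Classical in
lemma Rp_term {n : ℕ} (a b : Bool) :
    (∑ f : Fin n → Bool, ∑ g : Fin (n + 1) → Bool,
        if SC (Fin.cons a f) (Fin.cons b g) ∧ (Fin.cons b g : Fin (n + 2) → Bool) 0 = true then
          wt 0 (Fin.cons a f) * wt 1 (Fin.cons b g) else 0) =
      cond b (cond a (X 0 * (X 1 * Rp n)) (X 1 * Qp n)) 0 := by
  cases a <;> cases b <;> simp only [cond_true, cond_false]
  · -- a = false, b = false
    refine Finset.sum_eq_zero fun f _ => Finset.sum_eq_zero fun g _ => if_neg fun hc => ?_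
    simpa using hc.2
  · -- a = false, b = true
    rw [Qp_def]
    simp only [Finset.mul_sum]
    refine Finset.sum_congr rfl fun f _ => Finset.sum_congr rfl fun g _ => ?_
    rw [mul_ite, mul_zero]
    by_cases h : SC f g
    · rw [if_pos ⟨(SC_cons _ _ f g).mpr ⟨by simp, h⟩, by simp⟩, if_pos h, wt_cons, wt_cons]
      simp
      ring
    · rw [if_neg (fun hc => h ((SC_cons _ _ f g).mp hc.1).2), if_neg h]
  · -- a = true, b = false
    refine Finset.sum_eq_zero fun f _ => Finset.sum_eq_zero fun g _ => if_neg fun hc => ?_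
    simpa using hc.2
  · -- a = true, b = true
    rw [Rp_def]
    simp only [Finset.mul_sum]
    refine Finset.sum_congr rfl fun f _ => Finset.sum_congr rfl fun g _ => ?_
    rw [mul_ite, mul_zero, mul_ite, mul_zero]
    by_cases h : SC f g ∧ g 0 = true
    · rw [if_pos ⟨(SC_cons _ _ f g).mpr ⟨fun _ => ⟨rfl, h.2⟩, h.1⟩, by simp⟩,
        if_pos h, wt_cons, wt_cons]
      simp
      ring
    · refine if_neg (fun hc => ?_) |>.trans (if_neg h).symm
      have hm := (SC_cons _ _ f g).mp hc.1
      exact h ⟨hm.2, (hm.1 rfl).2⟩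

open scoped Classical in
lemma Qp_succ (n : ℕ) : Qp (n + 1) = (1 + X 1) * Qp n + X 0 * X 1 * Rp n := by
  rw [Qp_def]
  rw [double_split]
  rw [Fintype.sum_bool]
  rw [Fintype.sum_bool, Fintype.sum_bool]
  rw [Qp_term true true, Qp_term true false, Qp_term false true, Qp_term false false]
  simp only [cond_true, cond_false]
  ring

open scoped Classical in
lemma Rp_succ (n : ℕ) : Rp (n + 1) = X 1 * Qp n + X 0 * X 1 * Rp n := by
  rw [Rp_def]
  rw [double_split]
  rw [Fintype.sum_bool]
  rw [Fintype.sum_bool, Fintype.sum_bool]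
  rw [Rp_term true true, Rp_term true false, Rp_term false true, Rp_term false false]
  simp only [cond_true, cond_false]
  ring

open scoped Classical in
lemma Qp_zero : Qp 0 = 1 + X 1 := by
  rw [Qp_def]
  rw [Fintype.sum_unique, sum_cons_split, Fintype.sum_bool,
    Fintype.sum_unique, Fintype.sum_unique]
  have hSC : ∀ (h : Fin 0 → Bool) (g : Fin (0 + 1) → Bool), SC h g := fun h g i => i.elim0
  rw [if_pos (hSC _ _), if_pos (hSC _ _), wt_zero, wt_cons, wt_cons, wt_zero]
  simp [add_comm]

open scoped Classical in
lemma Rp_zero : Rp 0 = X 1 := by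
  rw [Rp_def]
  rw [Fintype.sum_unique, sum_cons_split, Fintype.sum_bool,
    Fintype.sum_unique, Fintype.sum_unique]
  have hSC : ∀ (h : Fin 0 → Bool) (g : Fin (0 + 1) → Bool), SC h g := fun h g i => i.elim0
  rw [if_pos ⟨hSC _ _, by simp⟩, if_neg (fun hc => by simpa using hc.2),
    wt_zero, wt_cons, wt_zero]
  simp

/-- The generating polynomials of successor closed subsets of the coefficient quivers
`Γ_n` satisfy `P_0 = 1 + y`, `P_1 = (1 + y + xy)·P_0 − xy` and the recursion
`P_{n+2} = (1 + y + xy)·P_{n+1} − xy·P_n`. -/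
theorem genPoly_recursion :
    genPoly 0 = 1 + X 1 ∧
    genPoly 1 = (1 + X 1 + X 0 * X 1) * genPoly 0 - X 0 * X 1 ∧
    ∀ n : ℕ, genPoly (n + 2) =
      (1 + X 1 + X 0 * X 1) * genPoly (n + 1) - X 0 * X 1 * genPoly n := by
  refine ⟨by rw [genPoly_eq_Qp, Qp_zero], ?_, fun n => ?_⟩
  · rw [genPoly_eq_Qp, genPoly_eq_Qp]
    have h1 : Qp 1 = (1 + X 1) * Qp 0 + X 0 * X 1 * Rp 0 := Qp_succ 0
    rw [h1, Qp_zero, Rp_zero]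
    ring
  · rw [genPoly_eq_Qp, genPoly_eq_Qp, genPoly_eq_Qp]
    have h1 : Qp (n + 2) = (1 + X 1) * Qp (n + 1) + X 0 * X 1 * Rp (n + 1) := Qp_succ (n + 1)
    have h2 := Rp_succ n
    have h3 := Qp_succ n
    linear_combination h1 + X (0:Fin 2) * X 1 * h2 - X 0 * X 1 * h3
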